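/- arXiv:1810.01946 — 4 statements merged into one kernel-verified Lean document; each statement's English description precedes it below -/
import Mathlib

section
/- There is an absolute constant C such that the following holds. Let d ≥ 1 and let S be a finite set of n non-vertical line segments in the plane, all of positive width, such that the widths of the segments of S pairwise differ by at most a factor d (i.e., the maximum width is at most d times the minimum width). Then the complexity of the upper envelope of S is at most C·d·n; in other words, the upper envelope of S has complexity O(dn). -/
/-!
Let `W` be the smallest width and cut the line into cells `[k W, (k + 1) W]`. Let `s` be the
segment on the envelope over a maximal piece with left end `u`. By maximality, `u` is an
endpoint of a segment or a point where a segment `g` on the envelope crosses `s` from above.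
If `s` reaches past the right wall of a cell containing `u`, charge the piece to `g` and that
cell: a second piece with the same charge and a larger left end `u'` would have `u'` in the
domain of `s` and to the right of `u`, where `g` is strictly below `s`, although `g` is on the
envelope at `u'`. As `s` has width at least `W`, if it does not reach past that wall, it reaches
past the left wall of a cell containing the right end of the piece, and the same charge works
in the mirror image. A segment meets at most `d + 2` cells, so there are `O(d n)` charges, and a
charge together with whether the piece contains its end determines the piece.
-/

/-- A non-vertical line segment in the plane of positive width, given by its two
endpoints, with the left endpoint having strictly smaller x-coordinate. -/
structure Seg where
  a : ℝ × ℝ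
  b : ℝ × ℝ
  lt : a.1 < b.1

namespace Seg

/-- The x-projection (domain) of a segment. -/
def dom (s : Seg) : Set ℝ := Set.Icc s.a.1 s.b.1

/-- The y-coordinate of the point of the segment on the vertical line through `x`
(linear interpolation between the endpoints). -/
noncomputable def val (s : Seg) (x : ℝ) : ℝ :=
  s.a.2 + (x - s.a.1) * (s.b.2 - s.a.2) / (s.b.1 - s.a.1)

/-- The width of a segment: the length of its projection onto the x-axis. -/
def width (s : Seg) : ℝ := s.b.1 - s.a.1

end Seg

/-- The upper envelope of a finite set of segments: at each `x`, the maximum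
y-coordinate of a point of a segment of `S` on the vertical line through `x`. -/
noncomputable def upperEnv (S : Finset Seg) (x : ℝ) : ℝ :=
  sSup {y | ∃ s ∈ S, x ∈ s.dom ∧ s.val x = y}

/-- `I` is a piece of the upper envelope of `S`: a nonempty subinterval of x-values
on which the envelope coincides with a single segment of `S`. -/
def EnvPiece (S : Finset Seg) (I : Set ℝ) : Prop :=
  I.Nonempty ∧ I.OrdConnected ∧
    ∃ s ∈ S, ∀ x ∈ I, x ∈ s.dom ∧ upperEnv S x = s.val x

/-- `I` is a maximal piece of the upper envelope of `S`. -/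
def MaxEnvPiece (S : Finset Seg) (I : Set ℝ) : Prop :=
  EnvPiece S I ∧ ∀ J : Set ℝ, EnvPiece S J → I ⊆ J → J = I

open Set Filter Topology

lemma Set.OrdConnected.subset_or_subset_of_csInf_eq {α : Type*}
    [ConditionallyCompleteLinearOrder α] {s t : Set α} (hs : s.OrdConnected)
    (ht : t.OrdConnected) (hs' : BddBelow s) (ht' : BddBelow t) (h : sInf s = sInf t)
    (hmem : sInf s ∈ s ↔ sInf t ∈ t) : s ⊆ t ∨ t ⊆ s := by
  by_contra! hst
  obtain ⟨x, hxs, hxt⟩ := not_subset.1 hst.1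
  obtain ⟨y, hyt, hys⟩ := not_subset.1 hst.2
  wlog hxy : x ≤ y generalizing s t x y
  · exact this ht hs ht' hs' h.symm hmem.symm hst.symm y hyt hys x hxs hxt (le_of_not_ge hxy)
  have hx : x ≤ sInf t := by
    by_contra! hlt
    obtain ⟨p, hpt, hpx⟩ := (csInf_lt_iff ht' ⟨y, hyt⟩).1 hlt
    exact hxt (ht.out hpt hyt ⟨hpx.le, hxy⟩)
  have hxeq : x = sInf s := le_antisymm (h ▸ hx) (csInf_le hs' hxs)
  rw [hxeq, h] at hxt
  exact hxt (hmem.1 (hxeq ▸ hxs))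

lemma Set.finite_and_ncard_le_card_of_rel {α β : Type*} {A : Set α} {B : Finset β}
    (r : α → β → Prop) (hA : ∀ a ∈ A, ∃ b ∈ B, r a b)
    (hr : ∀ a₁ ∈ A, ∀ a₂ ∈ A, ∀ b, r a₁ b → r a₂ b → a₁ = a₂) :
    A.Finite ∧ A.ncard ≤ B.card := by
  have hsub : ∀ b, {a | a ∈ A ∧ r a b}.Subsingleton := fun b a₁ h₁ a₂ h₂ =>
    hr a₁ h₁.1 a₂ h₂.1 b h₁.2 h₂.2
  have hfin : A.Finite := (B.finite_toSet.biUnion fun b _ => (hsub b).finite).subset fun a ha => by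
    obtain ⟨b, hb, hab⟩ := hA a ha
    exact mem_biUnion hb ⟨ha, hab⟩
  refine ⟨hfin, ?_⟩
  rw [Set.ncard_eq_toFinset_card A hfin]
  exact Finset.card_le_card_of_forall_subsingleton r (by simpa using hA)
    fun b _ => by simpa using hsub b

lemma card_Icc_ceil_sub_one_floor_le {W a b : ℝ} (hW : 0 < W) (hab : a ≤ b) :
    ((Finset.Icc (⌈a / W⌉ - 1) ⌊b / W⌋).card : ℝ) ≤ (b - a) / W + 2 := by
  have hle : ⌈a / W⌉ - 1 ≤ ⌊b / W⌋ + 1 := by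
    have := Int.ceil_le_floor_add_one (a / W)
    have := Int.floor_mono (div_le_div_of_nonneg_right hab hW.le)
    omega
  have hcard : ((Finset.Icc (⌈a / W⌉ - 1) ⌊b / W⌋).card : ℝ) =
      ((⌊b / W⌋ + 1 - (⌈a / W⌉ - 1) : ℤ) : ℝ) := by
    exact_mod_cast Int.card_Icc_of_le _ _ hle
  rw [hcard, sub_div]
  push_cast
  linarith [Int.floor_le (b / W), Int.le_ceil (a / W)]

/-- Read with `[u, -u'] ⊆ [a, b]`: the second alternative is the first one for the mirror
image `x ↦ -x`. -/
lemma exists_cell_wall_le_or_reflect {W a b u u' : ℝ} (hW : 0 < W) (hab : W ≤ b - a)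
    (huu' : u ≤ -u') (hbu' : -b ≤ u') :
    (∃ k : ℤ, k * W ≤ u ∧ u ≤ (k + 1) * W ∧ (k + 1) * W ≤ b) ∨
      ∃ k : ℤ, k * W ≤ u' ∧ u' ≤ (k + 1) * W ∧ (k + 1) * W ≤ -a := by
  have h₁ : (⌊u / W⌋ : ℝ) * W ≤ u := (le_div_iff₀ hW).1 (Int.floor_le _)
  have h₂ : u < (⌊u / W⌋ + 1 : ℝ) * W := (div_lt_iff₀ hW).1 (Int.lt_floor_add_one _)
  rcases le_or_gt ((⌊u / W⌋ + 1 : ℝ) * W) b with hb | hb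
  · exact .inl ⟨⌊u / W⌋, h₁, h₂.le, hb⟩
  · refine .inr ⟨-⌊u / W⌋ - 1, ?_, ?_, ?_⟩ <;> push_cast <;> nlinarith

namespace Seg

noncomputable def slope (s : Seg) : ℝ := (s.b.2 - s.a.2) / (s.b.1 - s.a.1)

lemma val_eq_add_slope_mul (s : Seg) (x y : ℝ) : s.val x = s.val y + s.slope * (x - y) := by
  unfold val slope
  ring

lemma continuous_val (s : Seg) : Continuous s.val := by
  unfold val
  fun_prop

lemma isClosed_dom (s : Seg) : IsClosed s.dom := isClosed_Icc

lemma width_pos (s : Seg) : 0 < s.width := sub_pos.2 s.lt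

lemma eventually_le_or_crosses (r s : Seg) {u : ℝ} (h : u ∈ r.dom → r.val u ≤ s.val u) :
    (∀ᶠ x in 𝓝[<] u, x ∈ r.dom → r.val x ≤ s.val x) ∨
      u ∈ r.dom ∧ r.val u = s.val u ∧ ∀ x, u < x → r.val x < s.val x := by
  by_cases hu : u ∈ r.dom
  swap
  · exact .inl <| eventually_nhdsWithin_of_eventually_nhds <|
      eventually_of_mem (r.isClosed_dom.isOpen_compl.mem_nhds hu) fun x hx hx' => absurd hx' hx
  rcases (h hu).lt_or_eq with hlt | heq
  · exact .inl <| eventually_nhdsWithin_of_eventually_nhds <|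
      (r.continuous_val.continuousAt.eventually_lt s.continuous_val.continuousAt hlt).mono
        fun x hx _ => hx.le
  have hdiff : ∀ x, r.val x - s.val x = (r.slope - s.slope) * (x - u) := fun x => by
    rw [r.val_eq_add_slope_mul x u, s.val_eq_add_slope_mul x u, heq]
    ring
  rcases lt_or_ge r.slope s.slope with hsl | hsl
  · refine .inr ⟨hu, heq, fun x hx => ?_⟩
    nlinarith [hdiff x]
  · refine .inl <| eventually_nhdsWithin_of_forall fun x (hx : x < u) _ => ?_
    nlinarith [hdiff x]

def reflect (s : Seg) : Seg := ⟨(-s.b.1, s.b.2), (-s.a.1, s.a.2), neg_lt_neg s.lt⟩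

lemma reflect_involutive : Function.Involutive reflect := fun _ => by
  simp [reflect]

def reflectEmb : Seg ↪ Seg := ⟨reflect, reflect_involutive.injective⟩

lemma map_reflectEmb_map_reflectEmb (S : Finset Seg) :
    (S.map reflectEmb).map reflectEmb = S := by
  ext s
  simp [reflectEmb, reflect_involutive _]

lemma mem_dom_reflect {s : Seg} {x : ℝ} : x ∈ s.reflect.dom ↔ -x ∈ s.dom := by
  simp only [dom, reflect, mem_Icc, neg_le, le_neg, and_comm]

lemma val_reflect (s : Seg) (x : ℝ) : s.reflect.val x = s.val (-x) := by
  have hw : s.b.1 - s.a.1 ≠ 0 := s.width_pos.ne'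
  simp only [val, reflect]
  rw [show -s.a.1 - -s.b.1 = s.b.1 - s.a.1 by ring]
  field_simp
  ring

lemma width_reflect (s : Seg) : s.reflect.width = s.width := by
  simp only [width, reflect]
  ring

end Seg

section Envelope

variable {S : Finset Seg} {s t : Seg} {x : ℝ}

lemma finite_setOf_exists_val_eq (S : Finset Seg) (x : ℝ) :
    {y | ∃ s ∈ S, x ∈ s.dom ∧ s.val x = y}.Finite :=
  (S.finite_toSet.image fun s => s.val x).subset fun _ ⟨s, hs, _, hy⟩ => ⟨s, hs, hy⟩

lemma le_upperEnv (ht : t ∈ S) (hx : x ∈ t.dom) : t.val x ≤ upperEnv S x :=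
  le_csSup (finite_setOf_exists_val_eq S x).bddAbove ⟨t, ht, hx, rfl⟩

lemma upperEnv_eq_of_forall_le (hs : s ∈ S) (hx : x ∈ s.dom)
    (h : ∀ t ∈ S, x ∈ t.dom → t.val x ≤ s.val x) : upperEnv S x = s.val x :=
  le_antisymm (csSup_le ⟨_, s, hs, hx, rfl⟩ fun _ ⟨t, ht, hxt, hy⟩ => hy ▸ h t ht hxt)
    (le_upperEnv hs hx)

lemma exists_val_eq_upperEnv (hs : s ∈ S) (hx : x ∈ s.dom) :
    ∃ t ∈ S, x ∈ t.dom ∧ t.val x = upperEnv S x :=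
  Set.Nonempty.csSup_mem (s := {y | ∃ s ∈ S, x ∈ s.dom ∧ s.val x = y})
    ⟨_, s, hs, hx, rfl⟩ (finite_setOf_exists_val_eq S x)

lemma upperEnv_map_reflect (S : Finset Seg) (x : ℝ) :
    upperEnv (S.map Seg.reflectEmb) x = upperEnv S (-x) := by
  simp only [upperEnv, Finset.mem_map, Seg.reflectEmb, Function.Embedding.coeFn_mk,
    exists_exists_and_eq_and, Seg.mem_dom_reflect, Seg.val_reflect]

end Envelope

def IsEnvWitness (S : Finset Seg) (I : Set ℝ) (s : Seg) : Prop :=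
  s ∈ S ∧ ∀ x ∈ I, x ∈ s.dom ∧ upperEnv S x = s.val x

namespace IsEnvWitness

variable {S : Finset Seg} {s t : Seg} {I : Set ℝ}

lemma bddBelow (hs : IsEnvWitness S I s) : BddBelow I :=
  ⟨s.a.1, fun x hx => (hs.2 x hx).1.1⟩

lemma sInf_mem_dom (hs : IsEnvWitness S I s) (hne : I.Nonempty) : sInf I ∈ s.dom :=
  s.isClosed_dom.closure_subset_iff.2 (fun x hx => (hs.2 x hx).1)
    (csInf_mem_closure hne hs.bddBelow)

/-- Points of `I` just right of `sInf I` lie in `t.dom`, where `t` is below the envelope `s`. -/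
lemma val_le_val_sInf (hs : IsEnvWitness S I s) (hne : I.Nonempty) (ht : t ∈ S)
    (hta : t.a.1 ≤ sInf I) (htb : sInf I < t.b.1) : t.val (sInf I) ≤ s.val (sInf I) := by
  by_contra! hlt
  have : (𝓝[I] sInf I).NeBot :=
    mem_closure_iff_nhdsWithin_neBot.1 (csInf_mem_closure hne hs.bddBelow)
  have hnear : ∀ᶠ x in 𝓝 (sInf I), s.val x < t.val x ∧ x < t.b.1 :=
    (s.continuous_val.continuousAt.eventually_lt t.continuous_val.continuousAt hlt).and
      (eventually_lt_nhds htb)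
  have hmem : ∀ᶠ x in 𝓝[I] sInf I, x ∈ I := self_mem_nhdsWithin
  obtain ⟨x, ⟨hst, hxb⟩, hxI⟩ := ((hnear.filter_mono nhdsWithin_le_nhds).and hmem).exists
  have hxt : x ∈ t.dom := ⟨hta.trans (csInf_le hs.bddBelow hxI), hxb.le⟩
  linarith [le_upperEnv ht hxt, (hs.2 x hxI).2]

lemma reflect (hs : IsEnvWitness S I s) : IsEnvWitness (S.map Seg.reflectEmb) (-I) s.reflect :=
  ⟨Finset.mem_map_of_mem _ hs.1, fun x hx => ⟨Seg.mem_dom_reflect.2 (hs.2 _ hx).1, by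
    rw [upperEnv_map_reflect, Seg.val_reflect, (hs.2 _ hx).2]⟩⟩

end IsEnvWitness

lemma EnvPiece.exists_witness {S : Finset Seg} {I : Set ℝ} (h : EnvPiece S I) :
    ∃ s, IsEnvWitness S I s :=
  h.2.2

lemma EnvPiece.reflect {S : Finset Seg} {I : Set ℝ} (h : EnvPiece S I) :
    EnvPiece (S.map Seg.reflectEmb) (-I) :=
  let ⟨s, hs⟩ := h.exists_witness
  ⟨h.1.neg, h.2.1.preimage_anti monotone_id.neg, s.reflect, hs.reflect⟩

lemma MaxEnvPiece.reflect {S : Finset Seg} {I : Set ℝ} (h : MaxEnvPiece S I) :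
    MaxEnvPiece (S.map Seg.reflectEmb) (-I) := by
  refine ⟨h.1.reflect, fun J hJ hIJ => ?_⟩
  have hJI := h.2 (-J) (by simpa [Seg.map_reflectEmb_map_reflectEmb] using hJ.reflect)
    (by simpa using Set.neg_subset_neg.2 hIJ)
  rw [← hJI, neg_neg]

namespace MaxEnvPiece

variable {S : Finset Seg} {s : Seg} {I : Set ℝ}

lemma eq_of_sInf_eq {I' : Set ℝ} (hI : MaxEnvPiece S I) (hI' : MaxEnvPiece S I')
    (h : sInf I = sInf I') (hmem : sInf I ∈ I ↔ sInf I' ∈ I') : I = I' := by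
  obtain ⟨s, hs⟩ := hI.1.exists_witness
  obtain ⟨s', hs'⟩ := hI'.1.exists_witness
  rcases hI.1.2.1.subset_or_subset_of_csInf_eq hI'.1.2.1 hs.bddBelow hs'.bddBelow h hmem
    with hsub | hsub
  · exact (hI.2 I' hI'.1 hsub).symm
  · exact hI'.2 I hI.1 hsub

/-- Otherwise `I` could be extended to the left by an interval. -/
lemma not_eventually_upperEnv_eq (hI : MaxEnvPiece S I) (hs : IsEnvWitness S I s)
    (ha : s.a.1 < sInf I) (henv : upperEnv S (sInf I) = s.val (sInf I)) :
    ¬ ∀ᶠ x in 𝓝[<] sInf I, upperEnv S x = s.val x := by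
  intro h
  obtain ⟨c, hc, hflat⟩ := (nhdsLT_basis (sInf I)).eventually_iff.1 h
  set c' := max c s.a.1
  have hc' : c' < sInf I := max_lt hc ha
  have hu := hs.sInf_mem_dom hI.1.1
  have hleft : ∀ x ∈ Ioc c' (sInf I), x ∈ s.dom ∧ upperEnv S x = s.val x := by
    rintro x ⟨hx₁, hx₂⟩
    refine ⟨⟨(le_max_right _ _).trans hx₁.le, hx₂.trans hu.2⟩, ?_⟩
    rcases hx₂.lt_or_eq with hlt | rfl
    · exact hflat ⟨(le_max_left _ _).trans_lt hx₁, hlt⟩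
    · exact henv
  have hconn : IsPreconnected (Ioc c' (sInf I) ∪ insert (sInf I) I) :=
    isPreconnected_Ioc.union _ (right_mem_Ioc.2 hc') (mem_insert _ _) <|
      hI.1.2.1.isPreconnected.subset_closure (subset_insert _ _)
        (insert_subset (csInf_mem_closure hI.1.1 hs.bddBelow) subset_closure)
  have hJ : EnvPiece S (Ioc c' (sInf I) ∪ insert (sInf I) I) := by
    refine ⟨hI.1.1.mono (subset_insert _ _ |>.trans subset_union_right),
      isPreconnected_iff_ordConnected.1 hconn, s, hs.1, ?_⟩
    rintro x (hx | rfl | hx)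
    · exact hleft x hx
    · exact hleft _ (right_mem_Ioc.2 hc')
    · exact hs.2 x hx
  have hmid : (c' + sInf I) / 2 ∈ Ioc c' (sInf I) ∪ insert (sInf I) I :=
    .inl ⟨by linarith, by linarith⟩
  rw [hI.2 _ hJ ((subset_insert _ _).trans subset_union_right)] at hmid
  linarith [csInf_le hs.bddBelow hmid]

lemma sInf_eq_endpoint_or_crossing (hI : MaxEnvPiece S I) (hs : IsEnvWitness S I s) :
    (∃ g ∈ S, sInf I = g.a.1) ∨ (∃ g ∈ S, sInf I = g.b.1) ∨
      ∃ g ∈ S, sInf I ∈ g.dom ∧ g.val (sInf I) = upperEnv S (sInf I) ∧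
        ∀ x, sInf I < x → g.val x < s.val x := by
  have hu := hs.sInf_mem_dom hI.1.1
  rcases hu.1.eq_or_lt with ha | ha
  · exact .inl ⟨s, hs.1, ha.symm⟩
  by_cases henv : upperEnv S (sInf I) = s.val (sInf I)
  swap
  · obtain ⟨t, ht, htu, htv⟩ := exists_val_eq_upperEnv hs.1 hu
    refine .inr (.inl ⟨t, ht, ?_⟩)
    by_contra htb
    have hle := hs.val_le_val_sInf hI.1.1 ht htu.1 (htu.2.lt_of_ne htb)
    exact henv (le_antisymm (htv ▸ hle) (le_upperEnv hs.1 hu))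
  refine .inr (.inr ?_)
  -- Otherwise every segment is below `s` just left of `sInf I`, so `I` is not maximal.
  by_contra hcross
  refine hI.not_eventually_upperEnv_eq hs ha henv ?_
  have hbelow : ∀ r ∈ S, ∀ᶠ x in 𝓝[<] sInf I, x ∈ r.dom → r.val x ≤ s.val x := by
    intro r hr
    refine (r.eventually_le_or_crosses s fun hr' => henv ▸ le_upperEnv hr hr').resolve_right ?_
    exact fun ⟨hr', heq, hlt⟩ => hcross ⟨r, hr, hr', heq.trans henv.symm, hlt⟩
  have hdom : ∀ᶠ x in 𝓝[<] sInf I, x ∈ s.dom :=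
    ((eventually_nhdsWithin_of_eventually_nhds (eventually_gt_nhds ha)).and
      self_mem_nhdsWithin).mono fun x ⟨hx₁, hx₂⟩ => ⟨hx₁.le, hx₂.le.trans hu.2⟩
  filter_upwards [(Filter.eventually_all_finset S).2 hbelow, hdom] with x hx hxs
  exact upperEnv_eq_of_forall_le hs.1 hxs hx

end MaxEnvPiece

section Tags

variable {S : Finset Seg} {W d : ℝ} {s : Seg} {I : Set ℝ}

/-- `sInf I` is the left endpoint (`0`) or the right endpoint (`1`) of `g`, or (`2`) a point
where `g`, on the envelope, crosses from above a segment `s` spanning `I` and reaching past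
the cell `[k W, (k + 1) W]`. -/
def LeftEndEvent (S : Finset Seg) (W : ℝ) (I : Set ℝ) (g : Seg) (k : ℤ) : Fin 3 → Prop
  | 0 => sInf I = g.a.1
  | 1 => sInf I = g.b.1
  | 2 => g.val (sInf I) = upperEnv S (sInf I) ∧
      ∃ s, IsEnvWitness S I s ∧ (k + 1) * W ≤ s.b.1 ∧
        ∀ x, sInf I < x → g.val x < s.val x

/-- `m` records whether `I` contains its left end. -/
def LeftEndTag (S : Finset Seg) (W : ℝ) (I : Set ℝ) : Seg × ℤ × Fin 3 × Bool → Prop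
  | (g, k, e, m) => g ∈ S ∧ sInf I ∈ g.dom ∧ k * W ≤ sInf I ∧ sInf I ≤ (k + 1) * W ∧
      (m ↔ sInf I ∈ I) ∧ LeftEndEvent S W I g k e

open Classical in
noncomputable def leftEndTags (S : Finset Seg) (W : ℝ) : Finset (Seg × ℤ × Fin 3 × Bool) :=
  S.biUnion fun g =>
    (Finset.Icc (⌈g.a.1 / W⌉ - 1) ⌊g.b.1 / W⌋ ×ˢ Finset.univ).image (Prod.mk g)

lemma LeftEndTag.mem_leftEndTags (hW : 0 < W) {τ : Seg × ℤ × Fin 3 × Bool}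
    (h : LeftEndTag S W I τ) : τ ∈ leftEndTags S W := by
  classical
  obtain ⟨g, k, e, m⟩ := τ
  obtain ⟨hg, hu, hk₁, hk₂, -, -⟩ := h
  refine Finset.mem_biUnion.2 ⟨g, hg, Finset.mem_image.2 ⟨(k, e, m), Finset.mem_product.2
    ⟨Finset.mem_Icc.2 ⟨?_, ?_⟩, Finset.mem_univ _⟩, rfl⟩⟩
  · rw [sub_le_iff_le_add, Int.ceil_le, div_le_iff₀ hW]
    push_cast
    linarith [hu.1]
  · rw [Int.le_floor, le_div_iff₀ hW]
    linarith [hu.2]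

lemma card_leftEndTags_le (hW : 0 < W) (hS : ∀ g ∈ S, g.width ≤ d * W) :
    ((leftEndTags S W).card : ℝ) ≤ 6 * (d + 2) * S.card := by
  classical
  have hcard : (leftEndTags S W).card ≤
      ∑ g ∈ S, (Finset.Icc (⌈g.a.1 / W⌉ - 1) ⌊g.b.1 / W⌋).card * 6 := by
    refine Finset.card_biUnion_le.trans (Finset.sum_le_sum fun g _ => ?_)
    exact Finset.card_image_le.trans (by simp [Finset.card_product])
  calc ((leftEndTags S W).card : ℝ)
      ≤ ∑ g ∈ S, ((Finset.Icc (⌈g.a.1 / W⌉ - 1) ⌊g.b.1 / W⌋).card : ℝ) * 6 := by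
        exact_mod_cast hcard
    _ ≤ ∑ _g ∈ S, 6 * (d + 2) := Finset.sum_le_sum fun g hg => by
        have := card_Icc_ceil_sub_one_floor_le hW g.lt.le
        have : (g.b.1 - g.a.1) / W ≤ d := (div_le_iff₀ hW).2 (hS g hg)
        linarith
    _ = 6 * (d + 2) * S.card := by
        rw [Finset.sum_const, nsmul_eq_mul]
        ring

lemma IsEnvWitness.not_sInf_lt_of_crossing {g : Seg} {u c : ℝ} (hs : IsEnvWitness S I s)
    (hne : I.Nonempty) (hc : c ≤ s.b.1) (hcross : ∀ x, sInf I < x → g.val x < s.val x)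
    (hg : g.val u = upperEnv S u) (hu : u ≤ c) : ¬ sInf I < u := fun hlt => by
  have hus : u ∈ s.dom := ⟨(hs.sInf_mem_dom hne).1.trans hlt.le, hu.trans hc⟩
  linarith [hcross u hlt, le_upperEnv hs.1 hus]

lemma MaxEnvPiece.eq_of_leftEndTag {I' : Set ℝ} {τ : Seg × ℤ × Fin 3 × Bool}
    (hI : MaxEnvPiece S I) (hI' : MaxEnvPiece S I')
    (h : LeftEndTag S W I τ) (h' : LeftEndTag S W I' τ) : I = I' := by
  obtain ⟨g, k, e, m⟩ := τ
  obtain ⟨-, -, -, hk, hm, he⟩ := h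
  obtain ⟨-, -, -, hk', hm', he'⟩ := h'
  refine hI.eq_of_sInf_eq hI' ?_ (hm.symm.trans hm')
  fin_cases e
  · exact he.trans he'.symm
  · exact he.trans he'.symm
  · obtain ⟨hg, s, hs, hb, hcross⟩ := he
    obtain ⟨hg', s', hs', hb', hcross'⟩ := he'
    exact le_antisymm (not_lt.1 (hs'.not_sInf_lt_of_crossing hI'.1.1 hb' hcross' hg hk))
      (not_lt.1 (hs.not_sInf_lt_of_crossing hI.1.1 hb hcross hg' hk'))

lemma MaxEnvPiece.exists_leftEndTag {k : ℤ} (hI : MaxEnvPiece S I) (hs : IsEnvWitness S I s)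
    (hk₁ : k * W ≤ sInf I) (hk₂ : sInf I ≤ (k + 1) * W) (hb : (k + 1) * W ≤ s.b.1) :
    ∃ τ, LeftEndTag S W I τ := by
  classical
  rcases hI.sInf_eq_endpoint_or_crossing hs with
    ⟨g, hg, he⟩ | ⟨g, hg, he⟩ | ⟨g, hg, hu, hval, hcross⟩
  · exact ⟨(g, k, 0, decide (sInf I ∈ I)), hg, he ▸ left_mem_Icc.2 g.lt.le, hk₁, hk₂,
      decide_eq_true_iff, he⟩
  · exact ⟨(g, k, 1, decide (sInf I ∈ I)), hg, he ▸ right_mem_Icc.2 g.lt.le, hk₁, hk₂,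
      decide_eq_true_iff, he⟩
  · exact ⟨(g, k, 2, decide (sInf I ∈ I)), hg, hu, hk₁, hk₂, decide_eq_true_iff, hval,
      s, hs, hb, hcross⟩

lemma MaxEnvPiece.exists_leftEndTag_or_reflect (hW : 0 < W) (hS : ∀ s ∈ S, W ≤ s.width)
    (hI : MaxEnvPiece S I) :
    (∃ τ, LeftEndTag S W I τ) ∨ ∃ τ, LeftEndTag (S.map Seg.reflectEmb) W (-I) τ := by
  obtain ⟨s, hs⟩ := hI.1.exists_witness
  obtain ⟨x, hx⟩ := hI.1.1
  have hx' : -x ∈ -I := by simpa using hx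
  have hle : sInf I ≤ -sInf (-I) :=
    (csInf_le hs.bddBelow hx).trans (le_neg.2 (csInf_le hs.reflect.bddBelow hx'))
  rcases exists_cell_wall_le_or_reflect hW (hS s hs.1) hle
      (hs.reflect.sInf_mem_dom ⟨_, hx'⟩).1 with ⟨k, hk⟩ | ⟨k, hk⟩
  · exact .inl (hI.exists_leftEndTag hs hk.1 hk.2.1 hk.2.2)
  · exact .inr (hI.reflect.exists_leftEndTag hs.reflect hk.1 hk.2.1 hk.2.2)

end Tags

section EndTags

variable {S : Finset Seg} {W d : ℝ} {I : Set ℝ}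

/-- Right ends of pieces of `S` are charged as left ends of pieces of the mirror image. -/
def EndTag (S : Finset Seg) (W : ℝ) (I : Set ℝ) :
    (Seg × ℤ × Fin 3 × Bool) ⊕ (Seg × ℤ × Fin 3 × Bool) → Prop :=
  Sum.elim (LeftEndTag S W I) (LeftEndTag (S.map Seg.reflectEmb) W (-I))

noncomputable def endTags (S : Finset Seg) (W : ℝ) :
    Finset ((Seg × ℤ × Fin 3 × Bool) ⊕ (Seg × ℤ × Fin 3 × Bool)) :=
  (leftEndTags S W).disjSum (leftEndTags (S.map Seg.reflectEmb) W)

lemma MaxEnvPiece.exists_endTag (hW : 0 < W) (hS : ∀ s ∈ S, W ≤ s.width)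
    (hI : MaxEnvPiece S I) : ∃ τ ∈ endTags S W, EndTag S W I τ := by
  rcases hI.exists_leftEndTag_or_reflect hW hS with ⟨τ, hτ⟩ | ⟨τ, hτ⟩
  · exact ⟨.inl τ, Finset.inl_mem_disjSum.2 (hτ.mem_leftEndTags hW), hτ⟩
  · exact ⟨.inr τ, Finset.inr_mem_disjSum.2 (hτ.mem_leftEndTags hW), hτ⟩

lemma MaxEnvPiece.eq_of_endTag {I' : Set ℝ} (hI : MaxEnvPiece S I) (hI' : MaxEnvPiece S I') :
    ∀ τ, EndTag S W I τ → EndTag S W I' τ → I = I'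
  | .inl _, h, h' => hI.eq_of_leftEndTag hI' h h'
  | .inr _, h, h' => neg_injective (hI.reflect.eq_of_leftEndTag hI'.reflect h h')

lemma card_endTags_le (hW : 0 < W) (hS : ∀ s ∈ S, s.width ≤ d * W) :
    ((endTags S W).card : ℝ) ≤ 12 * (d + 2) * S.card := by
  have hS' : ∀ s ∈ S.map Seg.reflectEmb, s.width ≤ d * W := by
    simpa [Seg.reflectEmb, Seg.width_reflect] using hS
  have h := card_leftEndTags_le hW hS
  have h' := card_leftEndTags_le hW hS'
  rw [Finset.card_map] at h'
  rw [endTags, Finset.card_disjSum, Nat.cast_add]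
  linarith

end EndTags

lemma exists_width_scale {S : Finset Seg} {d : ℝ}
    (hS : ∀ s ∈ S, ∀ t ∈ S, s.width ≤ d * t.width) :
    ∃ W > 0, (∀ s ∈ S, W ≤ s.width) ∧ ∀ s ∈ S, s.width ≤ d * W := by
  rcases S.eq_empty_or_nonempty with rfl | hne
  · exact ⟨1, one_pos, by simp, by simp⟩
  obtain ⟨t, ht, hmin⟩ := S.exists_min_image Seg.width hne
  exact ⟨t.width, t.width_pos, hmin, fun s hs => hS s hs t ht⟩

/-- The complexity of the upper envelope of a set of segments whose widths pairwise
differ by at most a factor `d` is `O(d·n)`. -/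
theorem upper_envelope_bounded_width_ratio_complexity :
    ∃ C : ℝ, 0 < C ∧ ∀ d : ℝ, 1 ≤ d → ∀ S : Finset Seg,
      (∀ s ∈ S, ∀ t ∈ S, s.width ≤ d * t.width) →
      {I : Set ℝ | MaxEnvPiece S I}.Finite ∧
      ({I : Set ℝ | MaxEnvPiece S I}.ncard : ℝ) ≤ C * d * (S.card : ℝ) := by
  refine ⟨36, by norm_num, fun d hd S hS => ?_⟩
  obtain ⟨W, hW, hWle, hWd⟩ := exists_width_scale hS
  obtain ⟨hfin, hcard⟩ := Set.finite_and_ncard_le_card_of_rel (EndTag S W)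
    (fun I hI => MaxEnvPiece.exists_endTag hW hWle hI)
    (fun I hI I' hI' => MaxEnvPiece.eq_of_endTag hI hI')
  refine ⟨hfin, ?_⟩
  calc ({I : Set ℝ | MaxEnvPiece S I}.ncard : ℝ)
        ≤ (endTags S W).card := by exact_mod_cast hcard
    _ ≤ 12 * (d + 2) * S.card := card_endTags_le hW hWd
    _ ≤ 36 * d * S.card := by nlinarith [(S.card.cast_nonneg : (0 : ℝ) ≤ S.card)]
end

section
/- If S and T are two x-monotone polylines with m and n vertices respectively, then the upper envelope of S and T (their pointwise maximum as functions of x, over the intersection of their domains) has at most 2(m + n) vertices. -/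
/-!
STATEMENT 1: If S and T are two x-monotone polylines with m and n vertices
respectively, then the upper envelope of S and T (their pointwise maximum as
functions of x, over the intersection of their domains) has at most 2(m + n)
vertices.
-/

/-- `f` is the function of the x-monotone polyline with the `k` vertices
`v 0, …, v (k-1)`: the vertices have strictly increasing x-coordinates, and on each
interval between consecutive vertices, `f` is the linear interpolation between
them.  (`f` is thereby determined on the domain `[(v 0).1, (v (k-1)).1]`.) -/
def IsPolyline (k : ℕ) (v : ℕ → ℝ × ℝ) (f : ℝ → ℝ) : Prop :=
  (∀ i j : ℕ, i < j → j < k → (v i).1 < (v j).1) ∧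
  (∀ i : ℕ, i < k → f (v i).1 = (v i).2) ∧
  (∀ i : ℕ, i + 1 < k → ∀ x ∈ Set.Icc (v i).1 (v (i + 1)).1,
    f x = (v i).2 + (x - (v i).1) * ((v (i + 1)).2 - (v i).2)
            / ((v (i + 1)).1 - (v i).1))


def AffOn (f : ℝ → ℝ) (c d : ℝ) : Prop :=
  ∃ p q : ℝ, ∀ x ∈ Set.Icc c d, f x = p * x + q

lemma affOn_subset {f : ℝ → ℝ} {c d c' d' : ℝ} (h : AffOn f c d)
    (h1 : c ≤ c') (h2 : d' ≤ d) : AffOn f c' d' := by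
  obtain ⟨p, q, hpq⟩ := h
  exact ⟨p, q, fun x hx => hpq x ⟨h1.trans hx.1, hx.2.trans h2⟩⟩

lemma aff_nonneg {p q c d : ℝ} (hc : 0 ≤ p * c + q) (hd : 0 ≤ p * d + q)
    {x : ℝ} (hx : x ∈ Set.Icc c d) : 0 ≤ p * x + q := by
  rcases le_or_gt 0 p with hp | hp
  · nlinarith [hx.1]
  · nlinarith [hx.2]

noncomputable def tau (f g : ℝ → ℝ) (c d : ℝ) : ℝ :=
  if (f c - g c) * (f d - g d) < 0 then
    (c * (f d - g d) - d * (f c - g c)) / ((f d - g d) - (f c - g c))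
  else if 0 ≤ f c - g c then d else c

lemma tau_bounds (f g : ℝ → ℝ) {c d : ℝ} (hcd : c ≤ d) :
    tau f g c d ∈ Set.Icc c d := by
  unfold tau
  set hc := f c - g c with hhc
  set hd := f d - g d with hhd
  split_ifs with h1 h2
  · have hne : hc ≠ hd := by
      intro he; rw [he] at h1; nlinarith
    have hcd' : c < d := by
      rcases lt_or_eq_of_le hcd with h | h
      · exact h
      · exfalso; apply hne; rw [hhc, hhd, h]
    rcases lt_or_ge 0 hc with hpos | hneg
    · have hdn : hd < 0 := by nlinarith
      have hden : hd - hc < 0 := by linarith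
      constructor
      · rw [le_div_iff_of_neg hden]; nlinarith
      · rw [div_le_iff_of_neg hden]; nlinarith
    · have hcn : hc < 0 := by
        rcases lt_or_eq_of_le hneg with h | h
        · exact h
        · exfalso; rw [h, zero_mul] at h1; exact lt_irrefl 0 h1
      have hdp : 0 < hd := by nlinarith
      have hden : 0 < hd - hc := by linarith
      constructor
      · rw [le_div_iff₀ hden]; nlinarith
      · rw [div_le_iff₀ hden]; nlinarith
  · exact ⟨hcd, le_refl d⟩
  · exact ⟨le_refl c, hcd⟩

lemma tau_aff {f g : ℝ → ℝ} {c d : ℝ} (hf : AffOn f c d) (hg : AffOn g c d)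
    (hcd : c ≤ d) :
    AffOn (fun x => max (f x) (g x)) c (tau f g c d) ∧
    AffOn (fun x => max (f x) (g x)) (tau f g c d) d := by
  obtain ⟨p1, q1, hf1⟩ := hf
  obtain ⟨p2, q2, hg1⟩ := hg
  have hcm : c ∈ Set.Icc c d := ⟨le_refl c, hcd⟩
  have hdm : d ∈ Set.Icc c d := ⟨hcd, le_refl d⟩
  set p := p1 - p2 with hp
  set q := q1 - q2 with hq
  have hdiff : ∀ x ∈ Set.Icc c d, f x - g x = p * x + q := by
    intro x hx; rw [hf1 x hx, hg1 x hx]; ring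
  have hcv : f c - g c = p * c + q := hdiff c hcm
  have hdv : f d - g d = p * d + q := hdiff d hdm
  have htb := tau_bounds f g hcd
  set t := tau f g c d with ht
  -- key: on any subinterval where f - g keeps sign, max is affine
  have maxf : ∀ c' d', c ≤ c' → d' ≤ d → (∀ x ∈ Set.Icc c' d', 0 ≤ p * x + q) →
      AffOn (fun x => max (f x) (g x)) c' d' := by
    intro c' d' h1 h2 hsgn
    refine ⟨p1, q1, fun x hx => ?_⟩
    have hx' : x ∈ Set.Icc c d := ⟨h1.trans hx.1, hx.2.trans h2⟩
    have hle : g x ≤ f x := by have := hsgn x hx; linarith [hdiff x hx']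
    show max (f x) (g x) = p1 * x + q1
    rw [max_eq_left hle]; exact hf1 x hx'
  have maxg : ∀ c' d', c ≤ c' → d' ≤ d → (∀ x ∈ Set.Icc c' d', p * x + q ≤ 0) →
      AffOn (fun x => max (f x) (g x)) c' d' := by
    intro c' d' h1 h2 hsgn
    refine ⟨p2, q2, fun x hx => ?_⟩
    have hx' : x ∈ Set.Icc c d := ⟨h1.trans hx.1, hx.2.trans h2⟩
    have hle : f x ≤ g x := by have := hsgn x hx; linarith [hdiff x hx']
    show max (f x) (g x) = p2 * x + q2
    rw [max_eq_right hle]; exact hg1 x hx'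
  have ht' : t = tau f g c d := ht
  unfold tau at ht'
  set hcc := f c - g c with hhcc
  set hdd := f d - g d with hhdd
  split_ifs at ht' with h1 h2
  · -- crossing case: p * t + q = 0
    have hne : hcc ≠ hdd := by intro he; rw [he] at h1; nlinarith
    have hcd' : c < d := by
      rcases lt_or_eq_of_le hcd with h | h
      · exact h
      · exfalso; apply hne; rw [hhcc, hhdd, h]
    have hpne : p ≠ 0 := by
      intro hp0
      apply hne; rw [hcv, hdv, hp0]; ring
    have hden : hdd - hcc = p * (d - c) := by rw [hcv, hdv]; ring
    have hdenne : hdd - hcc ≠ 0 := sub_ne_zero.mpr (Ne.symm hne)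
    have hdc : d - c ≠ 0 := sub_ne_zero.mpr hcd'.ne'
    have h2 : t * (hdd - hcc) = c * hdd - d * hcc := by
      rw [ht']; field_simp
    rw [hcv, hdv] at h2
    have h3 : (p * t + q) * (d - c) = 0 := by linear_combination h2
    have htval : p * t + q = 0 := by
      rcases mul_eq_zero.mp h3 with h | h
      · exact h
      · exact absurd h hdc
    rcases lt_or_ge 0 hcc with hpos | hneg
    · have hdn : hdd < 0 := by nlinarith
      constructor
      · apply maxf c t (le_refl c) htb.2
        intro x hx
        exact aff_nonneg (by rw [← hcv]; linarith) (by rw [htval]) hx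
      · apply maxg t d htb.1 (le_refl d)
        intro x hx
        have := aff_nonneg (p := -p) (q := -q) (c := t) (d := d)
          (by rw [neg_mul]; linarith [htval]) (by nlinarith [hdv]) hx
        linarith
    · have hcn : hcc < 0 := by
        rcases lt_or_eq_of_le hneg with h | h
        · exact h
        · exfalso; rw [h, zero_mul] at h1; exact lt_irrefl 0 h1
      have hdp : 0 < hdd := by nlinarith
      constructor
      · apply maxg c t (le_refl c) htb.2
        intro x hx
        have := aff_nonneg (p := -p) (q := -q) (c := c) (d := t)
          (by nlinarith [hcv]) (by rw [neg_mul]; linarith [htval]) hx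
        linarith
      · apply maxf t d htb.1 (le_refl d)
        intro x hx
        exact aff_nonneg (by rw [htval]) (by rw [← hdv]; linarith) hx
  · -- t = d, 0 ≤ hcc
    rw [ht']
    have hsingle : AffOn (fun x => max (f x) (g x)) d d := by
      refine ⟨0, max (f d) (g d), fun x hx => ?_⟩
      have : x = d := le_antisymm hx.2 hx.1
      rw [this]; ring
    refine ⟨?_, hsingle⟩
    rcases le_or_gt 0 hdd with hd0 | hd0
    · apply maxf c d (le_refl c) (le_refl d)
      intro x hx
      exact aff_nonneg (by rw [← hcv]; exact h2) (by rw [← hdv]; exact hd0) hx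
    · have hc0 : hcc = 0 := by nlinarith
      apply maxg c d (le_refl c) (le_refl d)
      intro x hx
      have := aff_nonneg (p := -p) (q := -q) (c := c) (d := d)
        (by nlinarith [hcv]) (by nlinarith [hdv]) hx
      linarith
  · -- t = c, hcc < 0
    push_neg at h2
    rw [ht']
    have hsingle : AffOn (fun x => max (f x) (g x)) c c := by
      refine ⟨0, max (f c) (g c), fun x hx => ?_⟩
      have : x = c := le_antisymm hx.2 hx.1
      rw [this]; ring
    refine ⟨hsingle, ?_⟩
    have hd0 : hdd ≤ 0 := by nlinarith
    apply maxg c d (le_refl c) (le_refl d)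
    intro x hx
    have := aff_nonneg (p := -p) (q := -q) (c := c) (d := d)
      (by nlinarith [hcv]) (by nlinarith [hdv]) hx
    linarith

lemma poly_aff {m : ℕ} {vS : ℕ → ℝ × ℝ} {fS : ℝ → ℝ}
    (hS : IsPolyline m vS fS) (hm : 2 ≤ m) {c d : ℝ}
    (h0 : (vS 0).1 ≤ c) (hcd : c < d) (hd : d ≤ (vS (m - 1)).1)
    (hsep : ∀ i, i < m → (vS i).1 ≤ c ∨ d ≤ (vS i).1) : AffOn fS c d := by
  classical
  set P : ℕ → Prop := fun i => (vS i).1 ≤ c with hP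
  have hP0 : P 0 := h0
  set i := Nat.findGreatest P (m - 2) with hi
  have hPi : P i := Nat.findGreatest_spec (Nat.zero_le _) hP0
  have hile : i ≤ m - 2 := Nat.findGreatest_le _
  have him : i + 1 < m := by omega
  have hnPi : ¬ P (i + 1) := by
    by_cases hc : i + 1 ≤ m - 2
    · exact Nat.findGreatest_is_greatest (by omega) hc
    · have : i + 1 = m - 1 := by omega
      rw [this]
      intro hPc
      have : (vS (m - 1)).1 ≤ c := hPc
      linarith
  have hci : c < (vS (i + 1)).1 := by
    have : ¬ (vS (i + 1)).1 ≤ c := hnPi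
    linarith [not_le.mp this]
  have hdi : d ≤ (vS (i + 1)).1 := by
    rcases hsep (i + 1) him with h | h
    · linarith
    · exact h
  set p : ℝ := ((vS (i + 1)).2 - (vS i).2) / ((vS (i + 1)).1 - (vS i).1) with hp
  refine ⟨p, (vS i).2 - (vS i).1 * p, fun x hx => ?_⟩
  have hx' : x ∈ Set.Icc (vS i).1 (vS (i + 1)).1 := ⟨le_trans hPi hx.1, le_trans hx.2 hdi⟩
  rw [hS.2.2 i him x hx', hp]
  ring

lemma polyline_of_finset (B : Finset ℝ) (hB : B.Nonempty) (g : ℝ → ℝ)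
    (haff : ∀ c ∈ B, ∀ d ∈ B, c < d → (∀ x ∈ B, x ≤ c ∨ d ≤ x) → AffOn g c d) :
    ∃ w : ℕ → ℝ × ℝ, IsPolyline B.card w g ∧
      (w 0).1 = B.min' hB ∧ (w (B.card - 1)).1 = B.max' hB := by
  classical
  set L := B.sort (· ≤ ·) with hL
  have hlen : L.length = B.card := Finset.length_sort _
  have hsorted : L.SortedLT := Finset.sortedLT_sort B
  have hmono : StrictMono L.get := hsorted.strictMono_get
  have hmem : ∀ (j : Fin L.length), L.get j ∈ B := fun j => (Finset.mem_sort _).mp (L.get_mem _)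
  have hpos : 0 < L.length := by
    rw [hlen]; exact Finset.card_pos.mpr hB
  refine ⟨fun i => (L.getD i 0, g (L.getD i 0)), ⟨?_, ?_, ?_⟩, ?_, ?_⟩
  · -- strict mono of x-coords
    intro i j hij hj
    simp only
    rw [List.getD_eq_get L 0 ⟨i, (by omega : i < L.length)⟩,
        List.getD_eq_get L 0 ⟨j, (by omega : j < L.length)⟩]
    exact hmono (by exact_mod_cast hij)
  · intro i hi
    simp
  · -- segments
    intro i hi1 x hx
    simp only at hx ⊢
    have hi : i < L.length := by omega
    have hi1' : i + 1 < L.length := by omega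
    rw [List.getD_eq_get L 0 ⟨i, hi⟩, List.getD_eq_get L 0 ⟨i + 1, hi1'⟩] at hx ⊢
    set c := L.get ⟨i, hi⟩ with hc
    set d := L.get ⟨i + 1, hi1'⟩ with hd
    have hcd : c < d := hmono (by exact_mod_cast Nat.lt_succ_self i)
    have hgap : ∀ y ∈ B, y ≤ c ∨ d ≤ y := by
      intro y hy
      obtain ⟨j, hjl⟩ := List.mem_iff_get.mp ((Finset.mem_sort (α := ℝ) (· ≤ ·)).mpr hy)
      rcases le_or_gt (j : ℕ) i with h | h
      · left; rw [← hjl]; exact hmono.monotone (by exact_mod_cast h)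
      · right; rw [← hjl]; exact hmono.monotone (by exact_mod_cast h)
    obtain ⟨p, q, hpq⟩ := haff c (hmem _) d (hmem _) hcd hgap
    have hgc : g c = p * c + q := hpq c ⟨le_refl c, hcd.le⟩
    have hgd : g d = p * d + q := hpq d ⟨hcd.le, le_refl d⟩
    rw [hpq x hx, hgc, hgd]
    have hne : d - c ≠ 0 := sub_ne_zero.mpr hcd.ne'
    field_simp
    ring
  · -- first vertex is min
    simp only
    rw [List.getD_eq_get L 0 ⟨0, hpos⟩]
    apply le_antisymm
    · apply Finset.le_min'
      intro y hy
      obtain ⟨j, hjl⟩ := List.mem_iff_get.mp ((Finset.mem_sort (α := ℝ) (· ≤ ·)).mpr hy)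
      rw [← hjl]
      exact hmono.monotone (by exact_mod_cast Nat.zero_le _)
    · exact Finset.min'_le B _ (hmem _)
  · -- last vertex is max
    simp only
    have hlast : B.card - 1 < L.length := by omega
    rw [List.getD_eq_get L 0 ⟨B.card - 1, hlast⟩]
    apply le_antisymm
    · exact Finset.le_max' B _ (hmem _)
    · apply Finset.max'_le
      intro y hy
      obtain ⟨j, hjl⟩ := List.mem_iff_get.mp ((Finset.mem_sort (α := ℝ) (· ≤ ·)).mpr hy)
      rw [← hjl]
      apply hmono.monotone
      have h1 := j.2
      have h2 : (Finset.sort B (fun x1 x2 => x1 ≤ x2)).length = B.card :=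
        Finset.length_sort _
      simp only [Fin.le_def]
      omega


/-- The upper envelope of two x-monotone polylines with `m` and `n` vertices,
taken over the (nonempty) intersection of their domains, is an x-monotone polyline
with at most `2(m + n)` vertices. -/
theorem upper_envelope_of_two_polylines (m n : ℕ) (hm : 2 ≤ m) (hn : 2 ≤ n)
    (vS vT : ℕ → ℝ × ℝ) (fS fT : ℝ → ℝ)
    (hS : IsPolyline m vS fS) (hT : IsPolyline n vT fT)
    (hdom : max (vS 0).1 (vT 0).1 ≤ min (vS (m - 1)).1 (vT (n - 1)).1) :
    ∃ (K : ℕ) (w : ℕ → ℝ × ℝ) (g : ℝ → ℝ),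
      1 ≤ K ∧ K ≤ 2 * (m + n) ∧ IsPolyline K w g ∧
      (w 0).1 = max (vS 0).1 (vT 0).1 ∧
      (w (K - 1)).1 = min (vS (m - 1)).1 (vT (n - 1)).1 ∧
      ∀ x ∈ Set.Icc (w 0).1 (w (K - 1)).1, g x = max (fS x) (fT x) := by
  classical
  set a := max (vS 0).1 (vT 0).1 with ha
  set b := min (vS (m - 1)).1 (vT (n - 1)).1 with hb
  rcases eq_or_lt_of_le hdom with heq | hab
  · -- degenerate case: domain is a single point
    refine ⟨1, fun _ => (a, max (fS a) (fT a)), fun _ => max (fS a) (fT a),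
      le_refl 1, by omega, ⟨?_, ?_, ?_⟩, rfl, heq.symm ▸ rfl, ?_⟩
    · intro i j hij hj; omega
    · intro i hi; rfl
    · intro i hi; omega
    · intro x hx
      simp only at hx
      have : x = a := le_antisymm hx.2 hx.1
      rw [this]
  · -- main case a < b
    set V : Finset ℝ := (Finset.range m).image (fun i => (vS i).1) ∪
      (Finset.range n).image (fun j => (vT j).1) with hV
    set B0 : Finset ℝ := V.filter (fun z => a ≤ z ∧ z ≤ b) with hB0def
    have haB0 : a ∈ B0 := by
      rw [hB0def, Finset.mem_filter]
      refine ⟨?_, le_refl a, hdom⟩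
      rw [hV, Finset.mem_union]
      rcases le_total (vT 0).1 (vS 0).1 with h | h
      · left
        exact Finset.mem_image.mpr ⟨0, Finset.mem_range.mpr (by omega), (max_eq_left h).symm ▸ rfl⟩
      · right
        exact Finset.mem_image.mpr ⟨0, Finset.mem_range.mpr (by omega), (max_eq_right h).symm ▸ rfl⟩
    have hbB0 : b ∈ B0 := by
      rw [hB0def, Finset.mem_filter]
      refine ⟨?_, hdom, le_refl b⟩
      rw [hV, Finset.mem_union]
      rcases le_total (vS (m - 1)).1 (vT (n - 1)).1 with h | h
      · left
        exact Finset.mem_image.mpr ⟨m - 1, Finset.mem_range.mpr (by omega), (min_eq_left h).symm ▸ rfl⟩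
      · right
        exact Finset.mem_image.mpr ⟨n - 1, Finset.mem_range.mpr (by omega), (min_eq_right h).symm ▸ rfl⟩
    have hB0card : B0.card ≤ m + n := by
      calc B0.card ≤ V.card := Finset.card_filter_le _ _
        _ ≤ ((Finset.range m).image (fun i => (vS i).1)).card +
            ((Finset.range n).image (fun j => (vT j).1)).card := Finset.card_union_le _ _
        _ ≤ m + n := by
            gcongr <;> [exact le_trans (Finset.card_image_le) (by simp);
              exact le_trans (Finset.card_image_le) (by simp)]
    have hB0mem : ∀ x ∈ B0, a ≤ x ∧ x ≤ b := by
      intro x hx; exact (Finset.mem_filter.mp hx).2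
    set nxt : ℝ → ℝ := fun c =>
      if h : (B0.filter (fun z => c < z)).Nonempty then (B0.filter (fun z => c < z)).min' h
      else c with hnxt
    have hnxtmem : ∀ c ∈ B0, nxt c ∈ B0 ∧ c ≤ nxt c := by
      intro c hc
      rw [hnxt]; dsimp only
      split_ifs with h
      · have := Finset.min'_mem _ h
        rw [Finset.mem_filter] at this
        exact ⟨this.1, this.2.le⟩
      · exact ⟨hc, le_refl c⟩
    have haffB0 : ∀ c ∈ B0, ∀ d ∈ B0, c < d → (∀ x ∈ B0, x ≤ c ∨ d ≤ x) →
        AffOn fS c d ∧ AffOn fT c d := by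
      intro c hc d hd hcd hgap
      have hac := hB0mem c hc
      have hbd := hB0mem d hd
      constructor
      · apply poly_aff hS hm (le_trans (le_max_left _ _) hac.1) hcd
          (le_trans hbd.2 (min_le_left _ _))
        intro i him
        by_contra hcon
        push_neg at hcon
        obtain ⟨h1', h2'⟩ := hcon
        have hmemi : (vS i).1 ∈ B0 := by
          rw [hB0def, Finset.mem_filter]
          exact ⟨Finset.mem_union_left _
            (Finset.mem_image.mpr ⟨i, Finset.mem_range.mpr him, rfl⟩),
            le_trans hac.1 h1'.le, le_trans h2'.le hbd.2⟩
        rcases hgap _ hmemi with h | h <;> linarith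
      · apply poly_aff hT hn (le_trans (le_max_right _ _) hac.1) hcd
          (le_trans hbd.2 (min_le_right _ _))
        intro i him
        by_contra hcon
        push_neg at hcon
        obtain ⟨h1', h2'⟩ := hcon
        have hmemi : (vT i).1 ∈ B0 := by
          rw [hB0def, Finset.mem_filter]
          exact ⟨Finset.mem_union_right _
            (Finset.mem_image.mpr ⟨i, Finset.mem_range.mpr him, rfl⟩),
            le_trans hac.1 h1'.le, le_trans h2'.le hbd.2⟩
        rcases hgap _ hmemi with h | h <;> linarith
    set B : Finset ℝ := B0 ∪ B0.image (fun c => tau fS fT c (nxt c)) with hBdef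
    have haB : a ∈ B := Finset.mem_union_left _ haB0
    have hbB : b ∈ B := Finset.mem_union_left _ hbB0
    have hBsub : ∀ x ∈ B, a ≤ x ∧ x ≤ b := by
      intro x hx
      rcases Finset.mem_union.mp hx with h | h
      · exact hB0mem x h
      · obtain ⟨c, hc, rfl⟩ := Finset.mem_image.mp h
        obtain ⟨hn1, hn2⟩ := hnxtmem c hc
        have htb := tau_bounds fS fT hn2
        exact ⟨le_trans (hB0mem c hc).1 htb.1, le_trans htb.2 (hB0mem _ hn1).2⟩
    have hBcard : B.card ≤ 2 * (m + n) := by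
      calc B.card ≤ B0.card + (B0.image (fun c => tau fS fT c (nxt c))).card :=
            Finset.card_union_le _ _
        _ ≤ B0.card + B0.card := Nat.add_le_add_left Finset.card_image_le _
        _ ≤ 2 * (m + n) := by omega
    have haffB : ∀ c' ∈ B, ∀ d' ∈ B, c' < d' → (∀ x ∈ B, x ≤ c' ∨ d' ≤ x) →
        AffOn (fun x => max (fS x) (fT x)) c' d' := by
      intro c' hc' d' hd' hlt hgap
      have hc'ab := hBsub c' hc'
      have hd'ab := hBsub d' hd'
      have hne1 : (B0.filter (fun z => z ≤ c')).Nonempty :=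
        ⟨a, Finset.mem_filter.mpr ⟨haB0, hc'ab.1⟩⟩
      set c0 := (B0.filter (fun z => z ≤ c')).max' hne1 with hc0def
      have hc0mem : c0 ∈ B0 ∧ c0 ≤ c' := by
        have := Finset.max'_mem _ hne1
        rw [Finset.mem_filter] at this
        exact this
      have hne2 : (B0.filter (fun z => d' ≤ z)).Nonempty :=
        ⟨b, Finset.mem_filter.mpr ⟨hbB0, hd'ab.2⟩⟩
      set d0 := (B0.filter (fun z => d' ≤ z)).min' hne2 with hd0def
      have hd0mem : d0 ∈ B0 ∧ d' ≤ d0 := by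
        have := Finset.min'_mem _ hne2
        rw [Finset.mem_filter] at this
        exact this
      have hc0d0 : c0 < d0 := lt_of_le_of_lt hc0mem.2 (lt_of_lt_of_le hlt hd0mem.2)
      have hgap0 : ∀ x ∈ B0, x ≤ c0 ∨ d0 ≤ x := by
        intro x hx
        rcases le_or_gt x c' with h | h
        · left; rw [hc0def]; exact Finset.le_max' (B0.filter (fun z => z ≤ c')) x (Finset.mem_filter.mpr ⟨hx, h⟩)
        rcases le_or_gt d' x with h2 | h2
        · right; rw [hd0def]; exact Finset.min'_le (B0.filter (fun z => d' ≤ z)) x (Finset.mem_filter.mpr ⟨hx, h2⟩)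
        · exfalso
          rcases hgap x (Finset.mem_union_left _ hx) with h3 | h3 <;> linarith
      obtain ⟨hafS, hafT⟩ := haffB0 c0 hc0mem.1 d0 hd0mem.1 hc0d0 hgap0
      have hnxtc0 : nxt c0 = d0 := by
        have hne3 : (B0.filter (fun z => c0 < z)).Nonempty :=
          ⟨d0, Finset.mem_filter.mpr ⟨hd0mem.1, hc0d0⟩⟩
        rw [hnxt]; dsimp only
        rw [dif_pos hne3]
        apply le_antisymm
        · exact Finset.min'_le _ _ (Finset.mem_filter.mpr ⟨hd0mem.1, hc0d0⟩)
        · have hmm := Finset.min'_mem _ hne3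
          rw [Finset.mem_filter] at hmm
          rcases hgap0 _ hmm.1 with h | h
          · exfalso; linarith [hmm.2]
          · exact h
      set t := tau fS fT c0 d0 with htdef
      have htB : t ∈ B := Finset.mem_union_right _
        (Finset.mem_image.mpr ⟨c0, hc0mem.1, by rw [hnxtc0]⟩)
      have htb := tau_bounds fS fT hc0d0.le
      obtain ⟨haff1, haff2⟩ := tau_aff hafS hafT hc0d0.le
      rcases hgap t htB with h | h
      · exact affOn_subset haff2 h hd0mem.2
      · exact affOn_subset haff1 hc0mem.2 h
    obtain ⟨w, hw, hw0, hwlast⟩ := polyline_of_finset B ⟨a, haB⟩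
      (fun x => max (fS x) (fT x)) haffB
    have hmin : B.min' ⟨a, haB⟩ = a := by
      apply le_antisymm
      · exact Finset.min'_le _ _ haB
      · exact Finset.le_min' _ _ _ (fun y hy => (hBsub y hy).1)
    have hmax : B.max' ⟨a, haB⟩ = b := by
      apply le_antisymm
      · exact Finset.max'_le _ _ _ (fun y hy => (hBsub y hy).2)
      · exact Finset.le_max' _ _ hbB
    refine ⟨B.card, w, fun x => max (fS x) (fT x),
      Finset.card_pos.mpr ⟨a, haB⟩, hBcard, hw, ?_, ?_, fun x hx => rfl⟩
    · rw [hw0, hmin]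
    · rw [hwlast, hmax]
end

section
/- Let f, g : [a, b] → ℝ be continuous piecewise-linear functions with at most m and at most n interior breakpoints respectively. Then the pointwise maximum max(f, g) is a continuous piecewise-linear function on [a, b] with at most 2(m + n) + 1 interior breakpoints. -/
/-!
STATEMENT 2: Let f, g : [a, b] → ℝ be continuous piecewise-linear functions with
at most m and at most n interior breakpoints respectively. Then max(f, g) is a
continuous piecewise-linear function on [a, b] with at most 2(m + n) + 1 interior
breakpoints.
-/

/-- `f` is affine on the set `s`. -/
def AffineOnSet (f : ℝ → ℝ) (s : Set ℝ) : Prop :=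
  ∃ c d : ℝ, ∀ x ∈ s, f x = c * x + d

/-- `f` is a continuous piecewise-linear function on `[a, b]` whose interior
breakpoints all belong to the finite set `B ⊆ (a, b)`: `f` is continuous on
`[a, b]` and affine on every subinterval of `[a, b]` whose interior contains no
point of `B`. -/
def IsCPWL (f : ℝ → ℝ) (a b : ℝ) (B : Finset ℝ) : Prop :=
  ContinuousOn f (Set.Icc a b) ∧ (↑B : Set ℝ) ⊆ Set.Ioo a b ∧
  ∀ x ∈ Set.Icc a b, ∀ y ∈ Set.Icc a b, x ≤ y →
    (∀ t ∈ B, t ∉ Set.Ioo x y) → AffineOnSet f (Set.Icc x y)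

/-!
Refine the breakpoints of `f` and `g` to their union `B`, so that both are affine
between consecutive points of `B`. On each of the `|B| + 1` resulting pieces the
maximum of two affine functions changes branch at most once, where they cross.
The breakpoints of `max f g` are thus among the points of `B` and one crossing
per piece: at most `|B| + (|B| + 1) ≤ 2(m + n) + 1` of them.
-/

open Set

lemma AffineOnSet.mono {f : ℝ → ℝ} {s t : Set ℝ} (hf : AffineOnSet f s) (hts : t ⊆ s) :
    AffineOnSet f t :=
  let ⟨c, d, h⟩ := hf
  ⟨c, d, fun x hx => h x (hts hx)⟩

lemma Icc_subset_Iic_or_Ici_of_notMem_Ioo {α : Type*} [LinearOrder α] {x y z : α} (hz : z ∉ Ioo x y) :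
    Icc x y ⊆ Iic z ∨ Icc x y ⊆ Ici z := by
  rw [mem_Ioo, not_and_or, not_lt, not_lt] at hz
  rcases hz with hzx | hyz
  · exact Or.inr fun u hu => hzx.trans hu.1
  · exact Or.inl fun u hu => hu.2.trans hyz

lemma exists_affineOnSet_max_Iic_Ici (c₁ d₁ c₂ d₂ : ℝ) : ∃ z : ℝ,
    AffineOnSet (fun u => max (c₁ * u + d₁) (c₂ * u + d₂)) (Iic z) ∧
    AffineOnSet (fun u => max (c₁ * u + d₁) (c₂ * u + d₂)) (Ici z) := by
  wlog hc : c₂ ≤ c₁ generalizing c₁ d₁ c₂ d₂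
  · simpa only [max_comm] using this c₂ d₂ c₁ d₁ (le_of_not_ge hc)
  rcases hc.eq_or_lt with rfl | hc
  · have hmax : AffineOnSet (fun u => max (c₂ * u + d₁) (c₂ * u + d₂)) univ :=
      ⟨c₂, max d₁ d₂, fun u _ => max_add_add_left _ _ _⟩
    exact ⟨0, hmax.mono (subset_univ _), hmax.mono (subset_univ _)⟩
  have hpos : 0 < c₁ - c₂ := sub_pos.mpr hc
  refine ⟨(d₂ - d₁) / (c₁ - c₂), ⟨c₂, d₂, fun u hu => max_eq_right ?_⟩,
    ⟨c₁, d₁, fun u hu => max_eq_left ?_⟩⟩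
  · have := (le_div_iff₀ hpos).mp (mem_Iic.mp hu)
    linarith
  · have := (div_le_iff₀ hpos).mp (mem_Ici.mp hu)
    linarith

namespace IsCPWL

variable {f g : ℝ → ℝ} {a b : ℝ} {B : Finset ℝ}

lemma congr (hf : IsCPWL f a b B) (hfg : EqOn f g (Icc a b)) : IsCPWL g a b B := by
  refine ⟨hf.1.congr hfg.symm, hf.2.1, fun x hx y hy hxy hB => ?_⟩
  obtain ⟨c, d, h⟩ := hf.2.2 x hx y hy hxy hB
  exact ⟨c, d, fun u hu => (hfg (Icc_subset_Icc hx.1 hy.2 hu)).symm.trans (h u hu)⟩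

lemma restrict {a' b' : ℝ} {B' : Finset ℝ} (hf : IsCPWL f a b B) (ha : a ≤ a') (hb : b' ≤ b)
    (hB' : (↑B' : Set ℝ) ⊆ Ioo a' b') (hB : ↑B ∩ Ioo a' b' ⊆ (↑B' : Set ℝ)) :
    IsCPWL f a' b' B' := by
  have hsub : Icc a' b' ⊆ Icc a b := Icc_subset_Icc ha hb
  refine ⟨hf.1.mono hsub, hB', fun x hx y hy hxy hB'xy => ?_⟩
  refine hf.2.2 x (hsub hx) y (hsub hy) hxy fun t ht htxy => ?_
  have ht' : t ∈ Ioo a' b' := ⟨hx.1.trans_lt htxy.1, htxy.2.trans_le hy.2⟩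
  exact hB'xy t (hB ⟨ht, ht'⟩) htxy

lemma mono {B' : Finset ℝ} (hf : IsCPWL f a b B) (hBB' : B ⊆ B')
    (hB' : (↑B' : Set ℝ) ⊆ Ioo a b) : IsCPWL f a b B' :=
  hf.restrict le_rfl le_rfl hB' (inter_subset_left.trans (Finset.coe_subset.mpr hBB'))

lemma affineOnSet_Icc_of_empty (hf : IsCPWL f a b ∅) : AffineOnSet f (Icc a b) := by
  rcases le_or_gt a b with hab | hba
  · exact hf.2.2 a (left_mem_Icc.mpr hab) b (right_mem_Icc.mpr hab) hab (by simp)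
  · exact ⟨0, 0, by simp [Icc_eq_empty_of_lt hba]⟩

lemma glue {t : ℝ} {B₁ B₂ : Finset ℝ} (hat : a < t) (htb : t < b)
    (h₁ : IsCPWL f a t B₁) (h₂ : IsCPWL f t b B₂) : IsCPWL f a b (insert t (B₁ ∪ B₂)) := by
  have hIcc := Icc_union_Icc_eq_Icc hat.le htb.le
  refine ⟨hIcc ▸ h₁.1.union_of_isClosed h₂.1 isClosed_Icc isClosed_Icc, ?_, ?_⟩
  · simp only [Finset.coe_insert, Finset.coe_union]
    refine insert_subset ⟨hat, htb⟩ (union_subset ?_ ?_)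
    · exact h₁.2.1.trans (Ioo_subset_Ioo_right htb.le)
    · exact h₂.2.1.trans (Ioo_subset_Ioo_left hat.le)
  · intro x hx y hy hxy hB
    have ht : t ∉ Ioo x y := hB t (Finset.mem_insert_self _ _)
    rcases le_or_gt y t with hyt | hty
    · exact h₁.2.2 x ⟨hx.1, hxy.trans hyt⟩ y ⟨hy.1, hyt⟩ hxy fun s hs => hB s (by simp [hs])
    · have htx : t ≤ x := not_lt.mp fun hxt => ht ⟨hxt, hty⟩
      exact h₂.2.2 x ⟨htx, hx.2⟩ y ⟨htx.trans hxy, hy.2⟩ hxy fun s hs => hB s (by simp [hs])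

end IsCPWL

lemma isCPWL_of_affineOnSet_Iic_Ici {h : ℝ → ℝ} {a b z : ℝ} (hc : ContinuousOn h (Icc a b))
    (hle : AffineOnSet h (Iic z)) (hge : AffineOnSet h (Ici z)) :
    ∃ B : Finset ℝ, B.card ≤ 1 ∧ IsCPWL h a b B := by
  have haff : ∀ {x y : ℝ}, z ∉ Ioo x y → AffineOnSet h (Icc x y) := fun hz =>
    (Icc_subset_Iic_or_Ici_of_notMem_Ioo hz).elim hle.mono hge.mono
  by_cases hz : z ∈ Ioo a b
  · refine ⟨{z}, (Finset.card_singleton z).le, hc, by simpa using hz, ?_⟩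
    exact fun x _ y _ _ hB => haff (hB z (Finset.mem_singleton_self z))
  · exact ⟨∅, by simp, hc, by simp, fun x hx y hy _ _ =>
      (haff hz).mono (Icc_subset_Icc hx.1 hy.2)⟩

lemma AffineOnSet.exists_isCPWL_max {f g : ℝ → ℝ} {a b : ℝ} (hf : AffineOnSet f (Icc a b))
    (hg : AffineOnSet g (Icc a b)) :
    ∃ B : Finset ℝ, B.card ≤ 1 ∧ IsCPWL (fun x => max (f x) (g x)) a b B := by
  obtain ⟨c₁, d₁, hf⟩ := hf
  obtain ⟨c₂, d₂, hg⟩ := hg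
  obtain ⟨z, hle, hge⟩ := exists_affineOnSet_max_Iic_Ici c₁ d₁ c₂ d₂
  obtain ⟨B, hcard, hB⟩ :=
    isCPWL_of_affineOnSet_Iic_Ici (Continuous.continuousOn (by fun_prop)) hle hge
  exact ⟨B, hcard, hB.congr fun x hx => by simp only [hf x hx, hg x hx]⟩

lemma IsCPWL.exists_isCPWL_max {f g : ℝ → ℝ} {a b : ℝ} {B : Finset ℝ}
    (hf : IsCPWL f a b B) (hg : IsCPWL g a b B) :
    ∃ B' : Finset ℝ, B'.card ≤ 2 * B.card + 1 ∧ IsCPWL (fun x => max (f x) (g x)) a b B' := by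
  induction B using Finset.induction_on_max generalizing b with
  | empty => simpa using hf.affineOnSet_Icc_of_empty.exists_isCPWL_max hg.affineOnSet_Icc_of_empty
  | insert t s hst ih =>
    have ht : t ∈ Ioo a b := hf.2.1 (Finset.mem_insert_self t s)
    have hs : (↑s : Set ℝ) ⊆ Ioo a t := fun x hx =>
      ⟨(hf.2.1 (Finset.mem_insert_of_mem hx)).1, hst x hx⟩
    have hleft : ∀ {h : ℝ → ℝ}, IsCPWL h a b (insert t s) → IsCPWL h a t s := fun hh =>
      hh.restrict le_rfl ht.2.le hs fun x ⟨hx, hxt⟩ => by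
        rcases Finset.mem_insert.mp hx with rfl | hx
        exacts [absurd hxt.2 (lt_irrefl x), hx]
    -- `t` is the largest breakpoint, so both functions are affine on `[t, b]`
    have hright : ∀ {h : ℝ → ℝ}, IsCPWL h a b (insert t s) → AffineOnSet h (Icc t b) :=
      fun hh => IsCPWL.affineOnSet_Icc_of_empty <|
        hh.restrict ht.1.le le_rfl (by simp) fun x ⟨hx, htx⟩ => by
          rcases Finset.mem_insert.mp hx with rfl | hx
          exacts [absurd htx.1 (lt_irrefl x), absurd htx.1 (hst x hx).not_gt]
    obtain ⟨B₁, hB₁, h₁⟩ := ih (hleft hf) (hleft hg)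
    obtain ⟨B₂, hB₂, h₂⟩ := (hright hf).exists_isCPWL_max (hright hg)
    refine ⟨insert t (B₁ ∪ B₂), ?_, h₁.glue ht.1 ht.2 h₂⟩
    calc (insert t (B₁ ∪ B₂)).card ≤ B₁.card + B₂.card + 1 :=
          (Finset.card_insert_le _ _).trans (Nat.add_le_add_right (Finset.card_union_le _ _) 1)
      _ ≤ 2 * (insert t s).card + 1 := by
          rw [Finset.card_insert_of_notMem fun hts => (hst t hts).false]
          omega

theorem max_of_piecewise_linear_general (a b : ℝ) (f g : ℝ → ℝ) (m n : ℕ)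
    (hf : ∃ B : Finset ℝ, B.card ≤ m ∧ IsCPWL f a b B)
    (hg : ∃ B : Finset ℝ, B.card ≤ n ∧ IsCPWL g a b B) :
    ∃ B : Finset ℝ, B.card ≤ 2 * (m + n) + 1 ∧
      IsCPWL (fun x => max (f x) (g x)) a b B := by
  obtain ⟨Bf, hBf, hf⟩ := hf
  obtain ⟨Bg, hBg, hg⟩ := hg
  have hsub : (↑(Bf ∪ Bg) : Set ℝ) ⊆ Ioo a b := by
    rw [Finset.coe_union]
    exact union_subset hf.2.1 hg.2.1
  obtain ⟨B, hB, hmax⟩ := (hf.mono Finset.subset_union_left hsub).exists_isCPWL_max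
    (hg.mono Finset.subset_union_right hsub)
  have hcard : (Bf ∪ Bg).card ≤ m + n := (Finset.card_union_le _ _).trans (add_le_add hBf hBg)
  exact ⟨B, by omega, hmax⟩

/-- The pointwise maximum of a continuous piecewise-linear function with at most
`m` interior breakpoints and one with at most `n` interior breakpoints is a
continuous piecewise-linear function with at most `2(m + n) + 1` interior
breakpoints. -/
theorem max_of_piecewise_linear (a b : ℝ) (hab : a < b) (f g : ℝ → ℝ) (m n : ℕ)
    (hf : ∃ B : Finset ℝ, B.card ≤ m ∧ IsCPWL f a b B)
    (hg : ∃ B : Finset ℝ, B.card ≤ n ∧ IsCPWL g a b B) :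
    ∃ B : Finset ℝ, B.card ≤ 2 * (m + n) + 1 ∧
      IsCPWL (fun x => max (f x) (g x)) a b B :=
  max_of_piecewise_linear_general a b f g m n hf hg
end

section
/- Let f : {q ∈ ℝ³ : q_x > 0 and q_y > 0} → ℝ³ be the central projection onto the view screen, f(q) = q / (q_x + q_y). Then for any two points p and r in the domain, the image under f of the line segment from p to r is exactly the line segment from f(p) to f(r). In particular, any line segment whose horizontal projection does not cross the north–south or east–west axis through the viewpoint appears as a line segment in the projection onto the view screen. -/
/-!
STATEMENT 9: Let f(q) = q/(q_x + q_y) be the central projection onto the view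
screen, defined on the open quadrant {q ∈ ℝ³ : q_x > 0, q_y > 0}. For any two
points p and r in the domain, the image under f of the line segment from p to r
is exactly the line segment from f(p) to f(r).
-/

/-- The central projection onto the view screen, on the open quadrant
`q_x > 0, q_y > 0` (where `|q_x| + |q_y| = q_x + q_y`). -/
noncomputable def viewProj (q : ℝ × ℝ × ℝ) : ℝ × ℝ × ℝ :=
  (q.1 + q.2.1)⁻¹ • q

/-!
The projection is the perspective map `f q = ℓ(q)⁻¹ • q` of the linear form `ℓ q = q_x + q_y`,
which is positive on the quadrant. Such a map is constant on rays through the origin, and on a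
combination `a • x + b • y` of points of the hyperplane `ℓ = 1` it only normalises the weights to
`a / (a + b)`, `b / (a + b)`. Writing `a • p + b • r = (a ℓ p) • f p + (b ℓ r) • f r` therefore
puts `f (a • p + b • r)` on `[f p, f r]`; conversely `a • f p + b • f r` lies on the ray through
the point of `[p, r]` with weights proportional to `a / ℓ p` and `b / ℓ r`.
-/

section Perspective

variable {𝕜 E : Type*} [Field 𝕜] [AddCommGroup E] [Module 𝕜 E] (ℓ : E →ₗ[𝕜] 𝕜)

def perspective (x : E) : E := (ℓ x)⁻¹ • x

theorem perspective_smul {c : 𝕜} (hc : c ≠ 0) (x : E) :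
    perspective ℓ (c • x) = perspective ℓ x := by
  rw [perspective, perspective, map_smul, smul_smul, smul_eq_mul, mul_inv_rev, mul_assoc,
    inv_mul_cancel₀ hc, mul_one]

theorem smul_perspective {x : E} (hx : ℓ x ≠ 0) : ℓ x • perspective ℓ x = x := by
  simp [perspective, smul_smul, hx]

theorem apply_perspective {x : E} (hx : ℓ x ≠ 0) : ℓ (perspective ℓ x) = 1 := by
  simp [perspective, hx]

theorem perspective_smul_add_smul {x y : E} (hx : ℓ x = 1) (hy : ℓ y = 1) (a b : 𝕜) :
    perspective ℓ (a • x + b • y) = (a / (a + b)) • x + (b / (a + b)) • y := by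
  simp only [perspective, map_add, map_smul, hx, hy, smul_eq_mul, mul_one, smul_add, smul_smul,
    div_eq_inv_mul]

theorem image_segment_perspective [LinearOrder 𝕜] [IsStrictOrderedRing 𝕜] {p r : E}
    (hp : 0 < ℓ p) (hr : 0 < ℓ r) :
    perspective ℓ '' segment 𝕜 p r = segment 𝕜 (perspective ℓ p) (perspective ℓ r) := by
  ext x
  constructor
  · rintro ⟨y, ⟨a, b, ha, hb, hab, rfl⟩, rfl⟩
    have hpos : 0 < a * ℓ p + b * ℓ r := convex_Ioi (0 : 𝕜) hp hr ha hb hab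
    refine mem_segment_iff_div.2 ⟨a * ℓ p, b * ℓ r, by positivity, by positivity, hpos, ?_⟩
    have hy : a • p + b • r = (a * ℓ p) • perspective ℓ p + (b * ℓ r) • perspective ℓ r := by
      rw [mul_smul, mul_smul, smul_perspective ℓ hp.ne', smul_perspective ℓ hr.ne']
    rw [hy, perspective_smul_add_smul ℓ (apply_perspective ℓ hp.ne') (apply_perspective ℓ hr.ne')]
  · rintro ⟨a, b, ha, hb, hab, rfl⟩
    have hpos : 0 < a / ℓ p + b / ℓ r := by
      simpa only [smul_eq_mul, div_eq_mul_inv, Set.mem_Ioi] using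
        convex_Ioi (0 : 𝕜) (inv_pos.2 hp) (inv_pos.2 hr) ha hb hab
    refine ⟨(a / ℓ p + b / ℓ r)⁻¹ • (a • perspective ℓ p + b • perspective ℓ r),
      mem_segment_iff_div.2 ⟨a / ℓ p, b / ℓ r, by positivity, by positivity, hpos, ?_⟩, ?_⟩
    · simp only [perspective, smul_add, smul_smul, div_eq_mul_inv, mul_comm]
    · rw [perspective_smul ℓ (inv_ne_zero hpos.ne'),
        perspective_smul_add_smul ℓ (apply_perspective ℓ hp.ne') (apply_perspective ℓ hr.ne'),
        hab, div_one, div_one]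

end Perspective

def horizontalSum : ℝ × ℝ × ℝ →ₗ[ℝ] ℝ := LinearMap.fst ℝ ℝ (ℝ × ℝ) +
  LinearMap.fst ℝ ℝ ℝ ∘ₗ LinearMap.snd ℝ ℝ (ℝ × ℝ)

theorem viewProj_eq_perspective : viewProj = perspective horizontalSum := by
  ext q <;> simp [viewProj, perspective, horizontalSum]

/-- The central projection onto the view screen maps line segments within an open
quadrant to line segments: any line segment whose horizontal projection does not
cross the north–south or east–west axis through the viewpoint appears as a line
segment in the projection onto the view screen. -/
theorem segment_projects_to_segment (p r : ℝ × ℝ × ℝ)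
    (hp₁ : 0 < p.1) (hp₂ : 0 < p.2.1) (hr₁ : 0 < r.1) (hr₂ : 0 < r.2.1) :
    viewProj '' segment ℝ p r = segment ℝ (viewProj p) (viewProj r) := by
  rw [viewProj_eq_perspective]
  exact image_segment_perspective horizontalSum (add_pos hp₁ hp₂) (add_pos hr₁ hr₂)
end
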